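/- Let A^F denote the fully connected network (partition {{1,…,n}}) and A^I the islands network (partition into n singletons), and define W(A) := a_0^n ⋅ ( (I − A)^{-1} u(A) ) with u(A)_i = log λ_{ℓ(i)}(A_i) + b_{ℓ(i),0} log b_{ℓ(i),0} + Σ_{j∈M} A_{i,j} log A_{i,j}, where A_i denotes the i-th row of A. If every category's productivity function λ_ℓ has increasing returns to diversification, then W(A^F) ≥ W(A^I); if every λ_ℓ has decreasing returns to diversification, then W(A^I) ≥ W(A^F). -/

import Mathlib

/-!
Replicate economy with n countries and L categories; firms are pairs
(category, country) in `Fin L × Fin n`; a partition 𝒬 of the countries is a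
`Setoid (Fin n)`; `AQ B Q` is the 𝒬-clustered network A^𝒬. The fully
connected network A^F corresponds to the single-cluster partition
(`⊤ : Setoid (Fin n)`), the islands network A^I to the partition into
singletons (`⊥ : Setoid (Fin n)`).
λ̄(x) = ∏_j x_j^{−x_j} (with 0^0 = 1, via `Real.rpow`) is the Hicks-neutral
benchmark; increasing/decreasing returns to diversification are as in the
paper. u(A)_i = log λ_{ℓ(i)}(A_i) + b_{ℓ(i),0} log b_{ℓ(i),0}
+ Σ_j A_{i,j} log A_{i,j} and W(A) = a_0^n ⋅ ((I − A)⁻¹ u(A)).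

STATEMENT 12: increasing returns to diversification for every category imply
W(A^F) ≥ W(A^I); decreasing returns imply W(A^I) ≥ W(A^F).
-/

noncomputable section

open Matrix Finset

attribute [local instance] Classical.propDecidable

/-- Firms: (category, country). -/
abbrev Firm (L n : ℕ) := Fin L × Fin n

/-- Cardinality of the cluster (equivalence class) of country `c`. -/
def clusterCard {n : ℕ} (Q : Setoid (Fin n)) (c : Fin n) : ℕ :=
  (univ.filter fun c' => Q.r c c').card

/-- The 𝒬-clustered production network A^𝒬. -/
def AQ {L n : ℕ} (B : Fin L → Fin L → ℝ) (Q : Setoid (Fin n)) :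
    Matrix (Firm L n) (Firm L n) ℝ :=
  Matrix.of fun i j =>
    if i.1 = j.1 then (if i = j then B i.1 i.1 else 0)
    else if Q.r i.2 j.2 then B i.1 j.1 / (clusterCard Q i.2 : ℝ) else 0

/-- Household consumption shares on firms: a0 ℓ / n. -/
def a0n {L : ℕ} (n : ℕ) (a0 : Fin L → ℝ) : Firm L n → ℝ :=
  fun i => a0 i.1 / n

/-- Hicks-neutral benchmark productivity λ̄(x) = ∏_j x_j^{−x_j} (0^0 = 1). -/
def lamBar {L n : ℕ} (x : Firm L n → ℝ) : ℝ :=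
  ∏ j, x j ^ (-(x j))

/-- Increasing returns to diversification. -/
def IncRTD {L n : ℕ} (lam : (Firm L n → ℝ) → ℝ) : Prop :=
  ∀ x x' : Firm L n → ℝ, (∀ j, 0 ≤ x j) → (∀ j, 0 ≤ x' j) →
    lamBar x' ≤ lamBar x → lamBar x / lamBar x' ≤ lam x / lam x'

/-- Decreasing returns to diversification. -/
def DecRTD {L n : ℕ} (lam : (Firm L n → ℝ) → ℝ) : Prop :=
  ∀ x x' : Firm L n → ℝ, (∀ j, 0 ≤ x j) → (∀ j, 0 ≤ x' j) →
    lamBar x' ≤ lamBar x → lam x / lam x' ≤ lamBar x / lamBar x'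

/-- Entropy-corrected productivity vector u(A). -/
def uR {L n : ℕ} (lam : Fin L → (Firm L n → ℝ) → ℝ) (b0 : Fin L → ℝ)
    (A : Matrix (Firm L n) (Firm L n) ℝ) : Firm L n → ℝ :=
  fun i => Real.log (lam i.1 (A i)) + b0 i.1 * Real.log (b0 i.1)
    + ∑ j, A i j * Real.log (A i j)

/-- Welfare W(A) = a_0^n ⋅ ((I − A)⁻¹ u(A)). -/
def WR {L n : ℕ} (a0 b0 : Fin L → ℝ) (lam : Fin L → (Firm L n → ℝ) → ℝ)
    (A : Matrix (Firm L n) (Firm L n) ℝ) : ℝ :=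
  a0n n a0 ⬝ᵥ ((1 - A)⁻¹.mulVec (uR lam b0 A))

/-!
Replication makes the influence vector a₀ⁿ (I − A^𝒬)⁻¹ independent of the partition: it is the
category-level vector a₀ (I − B)⁻¹ spread evenly over the n countries. Welfare is therefore the same
nonnegative combination of the entries u(A^𝒬)_i = log λ_ℓ(A_i) − log λ̄(A_i) + b_{ℓ,0} log b_{ℓ,0}
for every partition. Splitting each cross-category share b_{ℓ,ℓ'} evenly over n suppliers raises
the entropy of a row, so λ̄(A^I_i) ≤ λ̄(A^F_i), and returns to diversification turn this into an
entrywise comparison of u(A^F) and u(A^I).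
-/

namespace Matrix

section NonnegNeumann

attribute [local instance] Matrix.linftyOpNormedAddCommGroup Matrix.linftyOpNormedRing

variable {ι : Type*} [Fintype ι] [DecidableEq ι] {M : Matrix ι ι ℝ}

-- Instance search does not see `Matrix.instCompleteSpace` through the `linfty` norm.
theorem linftyOp_hasSummableGeomSeries : HasSummableGeomSeries (Matrix ι ι ℝ) :=
  @instHasSummableGeomSeriesOfCompleteSpace _ _ (instCompleteSpace ι ι ℝ)

attribute [local instance] linftyOp_hasSummableGeomSeries

theorem linfty_opNorm_lt_one_of_nonneg (h0 : ∀ i j, 0 ≤ M i j) (h1 : ∀ i, ∑ j, M i j < 1) :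
    ‖M‖ < 1 := by
  rw [linfty_opNorm_def, ← NNReal.coe_one, NNReal.coe_lt_coe,
    Finset.sup_lt_iff zero_lt_one]
  intro i _
  rw [← NNReal.coe_lt_coe]
  push_cast
  simpa only [Real.norm_of_nonneg (h0 i _)] using h1 i

theorem isUnit_one_sub_of_nonneg_of_sum_lt_one (h0 : ∀ i j, 0 ≤ M i j)
    (h1 : ∀ i, ∑ j, M i j < 1) : IsUnit (1 - M) :=
  isUnit_one_sub_of_norm_lt_one (linfty_opNorm_lt_one_of_nonneg h0 h1)

theorem inv_one_sub_apply_nonneg (h0 : ∀ i j, 0 ≤ M i j) (h1 : ∀ i, ∑ j, M i j < 1)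
    (i j : ι) : 0 ≤ (1 - M)⁻¹ i j := by
  have hsum := hasSum_geom_series_inverse M (linfty_opNorm_lt_one_of_nonneg h0 h1)
  rw [← nonsing_inv_eq_ringInverse] at hsum
  exact (Pi.hasSum.1 (Pi.hasSum.1 hsum i) j).nonneg fun k => pow_apply_nonneg h0 k i j

end NonnegNeumann

end Matrix

section Network

variable {L n : ℕ}

theorem clusterCard_pos (Q : Setoid (Fin n)) (c : Fin n) : 0 < clusterCard Q c :=
  Finset.card_pos.2 ⟨c, Finset.mem_filter.2 ⟨mem_univ c, Q.refl c⟩⟩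

theorem clusterCard_top (c : Fin n) : clusterCard (⊤ : Setoid (Fin n)) c = n := by
  simp [clusterCard, Setoid.top_def]

theorem clusterCard_bot (c : Fin n) : clusterCard (⊥ : Setoid (Fin n)) c = 1 := by
  simp [clusterCard, filter_eq]

theorem clusterCard_eq_of_rel {Q : Setoid (Fin n)} {c c' : Fin n} (h : Q.r c c') :
    clusterCard Q c = clusterCard Q c' := by
  unfold clusterCard
  congr 1
  ext d
  simp only [mem_filter, mem_univ, true_and]
  exact ⟨Q.trans (Q.symm h), Q.trans h⟩

theorem sum_ite_rel_div_clusterCard (Q : Setoid (Fin n)) (c : Fin n) (x : ℝ) :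
    ∑ c', (if Q.r c c' then x / clusterCard Q c else 0) = x := by
  rw [← sum_filter, sum_const, nsmul_eq_mul]
  exact mul_div_cancel₀ x (Nat.cast_ne_zero.2 (clusterCard_pos Q c).ne')

variable (B : Fin L → Fin L → ℝ) (Q : Setoid (Fin n))

theorem AQ_apply_of_fst_eq {i j : Firm L n} (h : i.1 = j.1) :
    AQ B Q i j = if i = j then B i.1 i.1 else 0 := by
  simp [AQ, h]

theorem AQ_apply_of_fst_ne {i j : Firm L n} (h : i.1 ≠ j.1) :
    AQ B Q i j = if Q.r i.2 j.2 then B i.1 j.1 / clusterCard Q i.2 else 0 := by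
  simp [AQ, h]

theorem AQ_nonneg (hB : ∀ ℓ ℓ', 0 ≤ B ℓ ℓ') (i j : Firm L n) : 0 ≤ AQ B Q i j := by
  unfold AQ
  simp only [of_apply]
  split_ifs <;>
    first | exact le_rfl | exact hB _ _ | exact div_nonneg (hB _ _) (Nat.cast_nonneg _)

theorem sum_AQ_apply_block (i : Firm L n) (ℓ' : Fin L) :
    ∑ c', AQ B Q i (ℓ', c') = B i.1 ℓ' := by
  by_cases h : i.1 = ℓ'
  · subst h
    simp [AQ_apply_of_fst_eq, Prod.ext_iff, eq_comm]
  · rw [sum_congr rfl fun c' _ => AQ_apply_of_fst_ne B Q (j := (ℓ', c')) h]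
    exact sum_ite_rel_div_clusterCard Q i.2 (B i.1 ℓ')

theorem sum_AQ_block_apply (ℓ : Fin L) (j : Firm L n) :
    ∑ c, AQ B Q (ℓ, c) j = B ℓ j.1 := by
  by_cases h : ℓ = j.1
  · subst h
    simp [AQ_apply_of_fst_eq, Prod.ext_iff]
  · have hcluster : ∀ c, AQ B Q (ℓ, c) j
        = if Q.r j.2 c then B ℓ j.1 / clusterCard Q j.2 else 0 := fun c => by
      rw [AQ_apply_of_fst_ne B Q h]
      by_cases hc : Q.r c j.2
      · rw [if_pos hc, if_pos (Q.symm hc), clusterCard_eq_of_rel hc]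
      · rw [if_neg hc, if_neg fun h' => hc (Q.symm h')]
    simp only [hcluster]
    exact sum_ite_rel_div_clusterCard Q j.2 _

theorem sum_AQ_apply (i : Firm L n) : ∑ j, AQ B Q i j = ∑ ℓ', B i.1 ℓ' := by
  simp only [Fintype.sum_prod_type, sum_AQ_apply_block]

theorem vecMul_AQ (V : Fin L → ℝ) :
    (fun i : Firm L n => V i.1) ᵥ* AQ B Q = fun j => (V ᵥ* of B) j.1 := by
  funext j
  simp only [vecMul, dotProduct, Fintype.sum_prod_type, ← mul_sum, sum_AQ_block_apply,
    of_apply]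

end Network

section Welfare

variable {L n : ℕ} {a0 : Fin L → ℝ} {B : Fin L → Fin L → ℝ}

def categoryInfluence (a0 : Fin L → ℝ) (B : Fin L → Fin L → ℝ) : Fin L → ℝ :=
  a0 ᵥ* (1 - of B)⁻¹

theorem categoryInfluence_nonneg (ha0 : 0 ≤ a0) (hB : ∀ ℓ ℓ', 0 ≤ B ℓ ℓ')
    (hBrow : ∀ ℓ, ∑ ℓ', B ℓ ℓ' < 1) :
    0 ≤ categoryInfluence a0 B := fun ℓ =>
  dotProduct_nonneg_of_nonneg ha0 fun ℓ' => inv_one_sub_apply_nonneg (M := of B) hB hBrow ℓ' ℓ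

theorem categoryInfluence_vecMul_one_sub (hB : ∀ ℓ ℓ', 0 ≤ B ℓ ℓ') (hBrow : ∀ ℓ, ∑ ℓ', B ℓ ℓ' < 1) :
    categoryInfluence a0 B ᵥ* (1 - of B) = a0 := by
  rw [categoryInfluence, vecMul_vecMul, nonsing_inv_mul _, vecMul_one]
  exact (isUnit_iff_isUnit_det _).1
    (isUnit_one_sub_of_nonneg_of_sum_lt_one (M := of B) hB hBrow)

theorem isUnit_one_sub_AQ (hB : ∀ ℓ ℓ', 0 ≤ B ℓ ℓ') (hBrow : ∀ ℓ, ∑ ℓ', B ℓ ℓ' < 1)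
    (Q : Setoid (Fin n)) : IsUnit (1 - AQ B Q) :=
  isUnit_one_sub_of_nonneg_of_sum_lt_one (AQ_nonneg B Q hB) fun i => by
    rw [sum_AQ_apply]; exact hBrow i.1

theorem a0n_vecMul_inv_one_sub_AQ (hB : ∀ ℓ ℓ', 0 ≤ B ℓ ℓ') (hBrow : ∀ ℓ, ∑ ℓ', B ℓ ℓ' < 1)
    (Q : Setoid (Fin n)) :
    a0n n a0 ᵥ* (1 - AQ B Q)⁻¹ = fun i => categoryInfluence a0 B i.1 / n := by
  set w : Firm L n → ℝ := fun i => categoryInfluence a0 B i.1 / n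
  have hw : w ᵥ* (1 - AQ B Q) = a0n n a0 := by
    funext j
    have hcat := congrFun (categoryInfluence_vecMul_one_sub (a0 := a0) hB hBrow) j.1
    rw [vecMul_sub, vecMul_one] at hcat ⊢
    rw [Pi.sub_apply, vecMul_AQ B Q (fun ℓ => categoryInfluence a0 B ℓ / n), a0n, ← hcat]
    simp [w, vecMul, dotProduct, div_mul_eq_mul_div, ← sum_div, sub_div]
  rw [← hw, vecMul_vecMul, mul_nonsing_inv _ ((isUnit_iff_isUnit_det _).1
    (isUnit_one_sub_AQ hB hBrow Q)), vecMul_one]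

theorem WR_AQ_eq (hB : ∀ ℓ ℓ', 0 ≤ B ℓ ℓ') (hBrow : ∀ ℓ, ∑ ℓ', B ℓ ℓ' < 1)
    (b0 : Fin L → ℝ) (lam : Fin L → (Firm L n → ℝ) → ℝ) (Q : Setoid (Fin n)) :
    WR a0 b0 lam (AQ B Q)
      = (fun i => categoryInfluence a0 B i.1 / n) ⬝ᵥ uR lam b0 (AQ B Q) := by
  rw [WR, dotProduct_mulVec, a0n_vecMul_inv_one_sub_AQ hB hBrow]

end Welfare

section Diversification

variable {L n : ℕ}

theorem rpow_neg_self_pos {t : ℝ} (ht : 0 ≤ t) : 0 < t ^ (-t) := by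
  rcases ht.eq_or_lt with rfl | ht
  · simp
  · exact Real.rpow_pos_of_pos ht _

theorem lamBar_pos {x : Firm L n → ℝ} (hx : 0 ≤ x) : 0 < lamBar x :=
  prod_pos fun j _ => rpow_neg_self_pos (hx j)

theorem log_lamBar {x : Firm L n → ℝ} (hx : 0 ≤ x) :
    Real.log (lamBar x) = -∑ j, x j * Real.log (x j) := by
  rw [lamBar, Real.log_prod fun j _ => (rpow_neg_self_pos (hx j)).ne', ← sum_neg_distrib]
  refine sum_congr rfl fun j _ => ?_
  rcases (hx j).eq_or_lt with h | h
  · simp [← h]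
  · rw [Real.log_rpow h, neg_mul]

theorem uR_apply {lam : Fin L → (Firm L n → ℝ) → ℝ} {b0 : Fin L → ℝ}
    {A : Matrix (Firm L n) (Firm L n) ℝ} {i : Firm L n} (hA : 0 ≤ A i) :
    uR lam b0 A i
      = Real.log (lam i.1 (A i)) - Real.log (lamBar (A i)) + b0 i.1 * Real.log (b0 i.1) := by
  rw [uR, log_lamBar hA]
  ring

theorem mul_log_div_natCast_le {b : ℝ} (hb : 0 ≤ b) {m : ℕ} (hm : 0 < m) :
    b * Real.log (b / m) ≤ b * Real.log b := by
  rcases hb.eq_or_lt with rfl | hb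
  · simp
  · exact mul_le_mul_of_nonneg_left (Real.log_le_log (by positivity)
      (div_le_self hb.le (by exact_mod_cast hm))) hb.le

variable {B : Fin L → Fin L → ℝ}

theorem sum_mul_log_AQ_top_le_bot (hB : ∀ ℓ ℓ', 0 ≤ B ℓ ℓ') (i : Firm L n) :
    ∑ j, AQ B ⊤ i j * Real.log (AQ B ⊤ i j) ≤ ∑ j, AQ B ⊥ i j * Real.log (AQ B ⊥ i j) := by
  simp only [Fintype.sum_prod_type]
  refine sum_le_sum fun ℓ' _ => ?_
  by_cases h : i.1 = ℓ'
  · simp only [AQ_apply_of_fst_eq B _ (j := (ℓ', _)) h, le_refl]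
  · have htop : ∀ c, AQ B ⊤ i (ℓ', c) = B i.1 ℓ' / n := fun c => by
      simp [AQ_apply_of_fst_ne B ⊤ (j := (ℓ', c)) h, clusterCard_top, Setoid.top_def]
    have hbot : ∀ c, AQ B ⊥ i (ℓ', c) = if i.2 = c then B i.1 ℓ' else 0 := fun c => by
      simp [AQ_apply_of_fst_ne B ⊥ (j := (ℓ', c)) h, clusterCard_bot]
    calc ∑ c, AQ B ⊤ i (ℓ', c) * Real.log (AQ B ⊤ i (ℓ', c))
        = B i.1 ℓ' * Real.log (B i.1 ℓ' / n) := by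
          have hn : (n : ℝ) ≠ 0 := Nat.cast_ne_zero.2 i.2.pos.ne'
          simp only [htop, sum_const, card_univ, Fintype.card_fin, nsmul_eq_mul]
          field_simp
      _ ≤ B i.1 ℓ' * Real.log (B i.1 ℓ') := mul_log_div_natCast_le (hB _ _) i.2.pos
      _ = ∑ c, AQ B ⊥ i (ℓ', c) * Real.log (AQ B ⊥ i (ℓ', c)) := by
          simp [hbot, apply_ite (fun x => x * Real.log x)]

theorem lamBar_AQ_bot_le_top (hB : ∀ ℓ ℓ', 0 ≤ B ℓ ℓ') (i : Firm L n) :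
    lamBar (AQ B ⊥ i) ≤ lamBar (AQ B ⊤ i) := by
  rw [← Real.log_le_log_iff (lamBar_pos (AQ_nonneg B ⊥ hB i)) (lamBar_pos (AQ_nonneg B ⊤ hB i)),
    log_lamBar (AQ_nonneg B ⊥ hB i), log_lamBar (AQ_nonneg B ⊤ hB i), neg_le_neg_iff]
  exact sum_mul_log_AQ_top_le_bot hB i

theorem IncRTD.log_sub_log_lamBar_le {lam : (Firm L n → ℝ) → ℝ} (h : IncRTD lam)
    (hlam : ∀ x, 0 < lam x) {x x' : Firm L n → ℝ} (hx : 0 ≤ x) (hx' : 0 ≤ x')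
    (hle : lamBar x' ≤ lamBar x) :
    Real.log (lam x') - Real.log (lamBar x') ≤ Real.log (lam x) - Real.log (lamBar x) := by
  have := Real.log_le_log (div_pos (lamBar_pos hx) (lamBar_pos hx')) (h x x' hx hx' hle)
  rw [Real.log_div (lamBar_pos hx).ne' (lamBar_pos hx').ne',
    Real.log_div (hlam x).ne' (hlam x').ne'] at this
  linarith

theorem DecRTD.log_sub_log_lamBar_le {lam : (Firm L n → ℝ) → ℝ} (h : DecRTD lam)
    (hlam : ∀ x, 0 < lam x) {x x' : Firm L n → ℝ} (hx : 0 ≤ x) (hx' : 0 ≤ x')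
    (hle : lamBar x' ≤ lamBar x) :
    Real.log (lam x) - Real.log (lamBar x) ≤ Real.log (lam x') - Real.log (lamBar x') := by
  have := Real.log_le_log (div_pos (hlam x) (hlam x')) (h x x' hx hx' hle)
  rw [Real.log_div (lamBar_pos hx).ne' (lamBar_pos hx').ne',
    Real.log_div (hlam x).ne' (hlam x').ne'] at this
  linarith

variable {b0 : Fin L → ℝ} {lam : Fin L → (Firm L n → ℝ) → ℝ}

theorem uR_AQ_bot_le_top (hB : ∀ ℓ ℓ', 0 ≤ B ℓ ℓ') (hlam : ∀ ℓ x, 0 < lam ℓ x)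
    (hInc : ∀ ℓ, IncRTD (lam ℓ)) : uR lam b0 (AQ B ⊥) ≤ uR lam b0 (AQ B ⊤) := fun i => by
  rw [uR_apply (AQ_nonneg B ⊥ hB i), uR_apply (AQ_nonneg B ⊤ hB i)]
  gcongr ?_ + _
  exact (hInc i.1).log_sub_log_lamBar_le (hlam i.1) (AQ_nonneg B ⊤ hB i) (AQ_nonneg B ⊥ hB i)
    (lamBar_AQ_bot_le_top hB i)

theorem uR_AQ_top_le_bot (hB : ∀ ℓ ℓ', 0 ≤ B ℓ ℓ') (hlam : ∀ ℓ x, 0 < lam ℓ x)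
    (hDec : ∀ ℓ, DecRTD (lam ℓ)) : uR lam b0 (AQ B ⊤) ≤ uR lam b0 (AQ B ⊥) := fun i => by
  rw [uR_apply (AQ_nonneg B ⊥ hB i), uR_apply (AQ_nonneg B ⊤ hB i)]
  gcongr ?_ + _
  exact (hDec i.1).log_sub_log_lamBar_le (hlam i.1) (AQ_nonneg B ⊤ hB i) (AQ_nonneg B ⊥ hB i)
    (lamBar_AQ_bot_le_top hB i)

end Diversification

theorem diversification_welfare_comparison_general
    (n L : ℕ)
    (a0 b0 : Fin L → ℝ) (B : Fin L → Fin L → ℝ)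
    (ha0 : ∀ ℓ, 0 < a0 ℓ)
    (hb0 : ∀ ℓ, 0 < b0 ℓ) (hB : ∀ ℓ ℓ', 0 ≤ B ℓ ℓ')
    (hrow : ∀ ℓ, b0 ℓ + ∑ ℓ', B ℓ ℓ' ≤ 1)
    (lam : Fin L → (Firm L n → ℝ) → ℝ) (hlam : ∀ ℓ x, 0 < lam ℓ x) :
    ((∀ ℓ, IncRTD (lam ℓ)) →
      WR a0 b0 lam (AQ B (⊥ : Setoid (Fin n)))
        ≤ WR a0 b0 lam (AQ B (⊤ : Setoid (Fin n))))
    ∧ ((∀ ℓ, DecRTD (lam ℓ)) →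
      WR a0 b0 lam (AQ B (⊤ : Setoid (Fin n)))
        ≤ WR a0 b0 lam (AQ B (⊥ : Setoid (Fin n)))) := by
  have hBrow : ∀ ℓ, ∑ ℓ', B ℓ ℓ' < 1 := fun ℓ => by linarith [hrow ℓ, hb0 ℓ]
  have hweight : 0 ≤ fun i : Firm L n => categoryInfluence a0 B i.1 / n := fun i =>
    div_nonneg (categoryInfluence_nonneg (fun ℓ => (ha0 ℓ).le) hB hBrow i.1) n.cast_nonneg
  simp only [WR_AQ_eq hB hBrow]
  exact ⟨fun hInc =>
      dotProduct_le_dotProduct_of_nonneg_left (uR_AQ_bot_le_top hB hlam hInc) hweight,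
    fun hDec => dotProduct_le_dotProduct_of_nonneg_left (uR_AQ_top_le_bot hB hlam hDec) hweight⟩

theorem diversification_welfare_comparison
    (n L : ℕ) (hn : 1 ≤ n) (hL : 1 ≤ L)
    (a0 b0 : Fin L → ℝ) (B : Fin L → Fin L → ℝ)
    (ha0 : ∀ ℓ, 0 < a0 ℓ) (ha0sum : ∑ ℓ, a0 ℓ = 1)
    (hb0 : ∀ ℓ, 0 < b0 ℓ) (hB : ∀ ℓ ℓ', 0 ≤ B ℓ ℓ')
    (hrow : ∀ ℓ, b0 ℓ + ∑ ℓ', B ℓ ℓ' ≤ 1)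
    (lam : Fin L → (Firm L n → ℝ) → ℝ) (hlam : ∀ ℓ x, 0 < lam ℓ x) :
    ((∀ ℓ, IncRTD (lam ℓ)) →
      WR a0 b0 lam (AQ B (⊥ : Setoid (Fin n)))
        ≤ WR a0 b0 lam (AQ B (⊤ : Setoid (Fin n))))
    ∧ ((∀ ℓ, DecRTD (lam ℓ)) →
      WR a0 b0 lam (AQ B (⊤ : Setoid (Fin n)))
        ≤ WR a0 b0 lam (AQ B (⊥ : Setoid (Fin n)))) :=
  diversification_welfare_comparison_general n L a0 b0 B ha0 hb0 hB hrow lam hlam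

end
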